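/- arXiv:2107.06345 — 2 statements merged into one kernel-verified Lean document; each statement's English description precedes it below -/
import Mathlib

section
/- Let (L,V) be a nonnegative pair with L̃ = (I−QQᵀ)L(I−QQᵀ), Q an orthonormal basis of span(V ∈ ℝ^{n×p}). Then (−1)^p · Σ_{X⊆{1,...,n}} det([[L_X, V_{X,:}],[(V_{X,:})ᵀ, 0]]) = det(I + L̃) · det(VᵀV), where the sum ranges over all subsets X of {1,...,n}. -/
/-!
Adding the identity to the `L` block, `det [[L + I, V], [Vᵀ, 0]]` expands row by row into the
principal minors that contain the whole border, which are exactly the summands. Writing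
`V = Q R` pulls out `det R ^ 2 = det (Vᵀ V)`. Multiplying `[[L + I, Q], [Qᵀ, 0]]` on the left by
`[[P, Q], [Qᵀ, 0]]`, where `P = I - Q Qᵀ` and the factor has determinant `(-1) ^ p`, gives the
block triangular `[[I + P L, 0], [Qᵀ (L + I), I]]`. Finally `det (I + P L) = det (I + P L P)`
because `P` is idempotent.
-/

open Matrix

/-- The saddle-point matrix `[[L_X, V_X],[V_Xᵀ, 0]]` restricted to rows/columns in `X`. -/
def saddleSub {n p : ℕ} (L : Matrix (Fin n) (Fin n) ℝ) (V : Matrix (Fin n) (Fin p) ℝ)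
    (X : Finset (Fin n)) : Matrix (↥X ⊕ Fin p) (↥X ⊕ Fin p) ℝ :=
  Matrix.fromBlocks (L.submatrix (fun i => i.1) (fun i => i.1))
    (V.submatrix (fun i => i.1) id) (V.submatrix (fun i => i.1) id)ᵀ 0

def Finset.disjSumUnivEquiv {α β : Type*} [Fintype β] (s : Finset α) :
    s ⊕ β ≃ s.disjSum (Finset.univ : Finset β) where
  toFun := Sum.elim (fun a => ⟨.inl a, by simp⟩) (fun b => ⟨.inr b, by simp⟩)
  invFun
    | ⟨.inl a, h⟩ => .inl ⟨a, Finset.inl_mem_disjSum.mp h⟩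
    | ⟨.inr b, _⟩ => .inr b
  left_inv := by rintro (a | b) <;> rfl
  right_inv := by rintro ⟨a | b, h⟩ <;> rfl

namespace Matrix

section PrincipalMinors

variable {ι κ R : Type*} [Fintype ι] [DecidableEq ι] [Fintype κ] [DecidableEq κ] [CommRing R]

theorem det_piecewise_diagonal (A : Matrix ι ι R) (d : ι → R) (s : Finset ι) :
    det (of (s.piecewise A.row (diagonal d).row)) =
      (∏ i ∈ sᶜ, d i) * (A.submatrix ((↑) : s → ι) (↑)).det := by
  have hrows : s.piecewise A.row (diagonal d).row =
      sᶜ.piecewise (fun i => d i • s.piecewise A.row (1 : Matrix ι ι R).row i)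
        (s.piecewise A.row (1 : Matrix ι ι R).row) := by
    ext i j
    by_cases hi : i ∈ s <;> simp [hi, Finset.piecewise, row, diagonal, one_apply]
  rw [hrows, ← det_piecewise_one_eq_submatrix_det]
  exact (detRowAlternating : (ι → R) [⋀^ι]→ₗ[R] R).map_piecewise_smul _ _ _

theorem det_add_diagonal (A : Matrix ι ι R) (d : ι → R) :
    (A + diagonal d).det =
      ∑ s : Finset ι, (∏ i ∈ sᶜ, d i) * (A.submatrix ((↑) : s → ι) (↑)).det := by
  simp_rw [← det_piecewise_diagonal]
  exact (detRowAlternating : (ι → R) [⋀^ι]→ₗ[R] R).map_add_univ A.row (diagonal d).row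

theorem det_add_diagonal_sumElim_one_zero (A : Matrix (ι ⊕ κ) (ι ⊕ κ) R) :
    (A + diagonal (Sum.elim 1 0)).det =
      ∑ X : Finset ι, (A.submatrix (Sum.map ((↑) : X → ι) id) (Sum.map (↑) id)).det := by
  rw [det_add_diagonal, ← Finset.sumEquiv.symm.sum_comp, Fintype.sum_prod_type]
  refine Finset.sum_congr rfl fun X _ => ?_
  rw [Finset.sum_eq_single Finset.univ]
  · simp only [OrderIso.coe_toEquiv, Finset.sumEquiv_symm_apply]
    have hprod : ∏ i ∈ (X.disjSum (Finset.univ : Finset κ))ᶜ, Sum.elim (1 : ι → R) 0 i = 1 := by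
      refine Finset.prod_eq_one fun i hi => ?_
      rcases i with a | k
      · rfl
      · simp at hi
    have hsub : A.submatrix (Sum.map ((↑) : X → ι) id) (Sum.map (↑) id) =
        (A.submatrix ((↑) : X.disjSum Finset.univ → ι ⊕ κ) (↑)).submatrix
          X.disjSumUnivEquiv X.disjSumUnivEquiv := by
      ext (i | k) (j | l) <;> rfl
    rw [hprod, one_mul, hsub]
    exact (det_submatrix_equiv_self X.disjSumUnivEquiv
      (A.submatrix ((↑) : X.disjSum (Finset.univ : Finset κ) → ι ⊕ κ) (↑))).symm
  · intro T _ hT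
    obtain ⟨k, hk⟩ : ∃ k, k ∉ T := by simpa [Finset.eq_univ_iff_forall] using hT
    rw [Finset.prod_eq_zero (i := .inr k) (by simpa using hk) rfl, zero_mul]
  · simp

end PrincipalMinors

theorem fromBlocks_add_diagonal_sumElim_one_zero {m n R : Type*} [DecidableEq m] [DecidableEq n]
    [CommRing R] (A : Matrix m m R) (B : Matrix m n R) (C : Matrix n m R) :
    fromBlocks A B C 0 + diagonal (Sum.elim 1 0) = fromBlocks (A + 1) B C 0 := by
  simp [← fromBlocks_diagonal, fromBlocks_add]

theorem isIdempotentElem_mul_transpose {m n R : Type*} [Fintype m] [Fintype n] [DecidableEq n]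
    [CommRing R] {Q : Matrix m n R} (hQ : Qᵀ * Q = 1) : IsIdempotentElem (Q * Qᵀ) := by
  rw [IsIdempotentElem, Matrix.mul_assoc, ← Matrix.mul_assoc Qᵀ, hQ, Matrix.one_mul]

section Border

variable {m n R : Type*} [Fintype m] [DecidableEq m] [Fintype n] [DecidableEq n] [CommRing R]

theorem det_fromBlocks_mul_border (A : Matrix m m R) (Q : Matrix m n R) (B : Matrix n n R) :
    (fromBlocks A (Q * B) (Q * B)ᵀ 0).det = B.det ^ 2 * (fromBlocks A Q Qᵀ 0).det := by
  have hfactor : fromBlocks A (Q * B) (Q * B)ᵀ 0 =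
      fromBlocks 1 0 0 Bᵀ * fromBlocks A Q Qᵀ 0 * fromBlocks 1 0 0 B := by
    simp [fromBlocks_multiply, transpose_mul]
  rw [hfactor, det_mul, det_mul, det_fromBlocks_zero₂₁, det_fromBlocks_zero₂₁, det_one,
    det_transpose]
  ring

theorem det_fromBlocks_one_sub_mul_transpose {Q : Matrix m n R} (hQ : Qᵀ * Q = 1) :
    (fromBlocks (1 - Q * Qᵀ) Q Qᵀ 0).det = (-1) ^ Fintype.card n := by
  have hfactor : fromBlocks (1 - Q * Qᵀ) Q Qᵀ 0 = fromBlocks 1 (-Q) 0 1 * fromBlocks 1 Q Qᵀ 0 := by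
    simp [fromBlocks_multiply, sub_eq_add_neg]
  rw [hfactor, det_mul, det_fromBlocks_zero₂₁, det_fromBlocks_one₁₁, hQ]
  simp [det_neg]

theorem det_fromBlocks_add_one_orthonormal_border {Q : Matrix m n R} (hQ : Qᵀ * Q = 1)
    (L : Matrix m m R) :
    (-1) ^ Fintype.card n * (fromBlocks (L + 1) Q Qᵀ 0).det = (1 + (1 - Q * Qᵀ) * L).det := by
  have hPQ : (1 - Q * Qᵀ) * Q = 0 := by
    rw [Matrix.sub_mul, Matrix.mul_assoc, hQ, Matrix.one_mul, Matrix.mul_one, sub_self]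
  have htriangular : fromBlocks (1 - Q * Qᵀ) Q Qᵀ 0 * fromBlocks (L + 1) Q Qᵀ 0 =
      fromBlocks (1 + (1 - Q * Qᵀ) * L) 0 (Qᵀ * (L + 1)) 1 := by
    simp only [fromBlocks_multiply, hPQ, hQ, Matrix.mul_zero, Matrix.zero_mul, add_zero]
    congr 1
    noncomm_ring
  rw [← det_fromBlocks_one_sub_mul_transpose hQ, ← det_mul, htriangular, det_fromBlocks_zero₁₂,
    det_one, mul_one]

theorem _root_.IsIdempotentElem.det_one_add_mul_mul {P : Matrix m m R} (hP : IsIdempotentElem P)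
    (L : Matrix m m R) : (1 + P * L * P).det = (1 + P * L).det := by
  rw [det_one_add_mul_comm, ← Matrix.mul_assoc, hP.eq]

end Border

end Matrix

theorem saddleSub_eq_submatrix {n p : ℕ} (L : Matrix (Fin n) (Fin n) ℝ)
    (V : Matrix (Fin n) (Fin p) ℝ) (X : Finset (Fin n)) :
    saddleSub L V X = (fromBlocks L V Vᵀ 0).submatrix (Sum.map (↑) id) (Sum.map (↑) id) := by
  ext (i | k) (j | l) <;> rfl

theorem sum_det_saddleSub {n p : ℕ} (L : Matrix (Fin n) (Fin n) ℝ)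
    (V : Matrix (Fin n) (Fin p) ℝ) :
    ∑ X : Finset (Fin n), (saddleSub L V X).det = (fromBlocks (L + 1) V Vᵀ 0).det := by
  simp_rw [← fromBlocks_add_diagonal_sumElim_one_zero, det_add_diagonal_sumElim_one_zero,
    saddleSub_eq_submatrix]

theorem saddle_normalisation_general {n p : ℕ}
    (L : Matrix (Fin n) (Fin n) ℝ)
    (V : Matrix (Fin n) (Fin p) ℝ)
    (Q : Matrix (Fin n) (Fin p) ℝ) (hQQ : Qᵀ * Q = 1)
    (hspan : ∃ R : Matrix (Fin p) (Fin p) ℝ, V = Q * R) :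
    (-1 : ℝ) ^ p * ∑ X : Finset (Fin n), (saddleSub L V X).det =
      (1 + (1 - Q * Qᵀ) * L * (1 - Q * Qᵀ)).det * (Vᵀ * V).det := by
  obtain ⟨R, rfl⟩ := hspan
  have hgram : (Q * R)ᵀ * (Q * R) = Rᵀ * R := by
    rw [transpose_mul, Matrix.mul_assoc, ← Matrix.mul_assoc Qᵀ, hQQ, Matrix.one_mul]
  rw [sum_det_saddleSub, det_fromBlocks_mul_border,
    (isIdempotentElem_mul_transpose hQQ).one_sub.det_one_add_mul_mul,
    ← det_fromBlocks_add_one_orthonormal_border hQQ, Fintype.card_fin, hgram, det_mul,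
    det_transpose]
  ring

/-- Normalisation constant of a varying-size extended L-ensemble. -/
theorem saddle_normalisation {n p : ℕ}
    (L : Matrix (Fin n) (Fin n) ℝ) (hL : Lᵀ = L)
    (V : Matrix (Fin n) (Fin p) ℝ) (hV : V.rank = p)
    (hCPSD : ∀ x : Fin n → ℝ, Vᵀ.mulVec x = 0 → 0 ≤ x ⬝ᵥ L.mulVec x)
    (Q : Matrix (Fin n) (Fin p) ℝ) (hQQ : Qᵀ * Q = 1)
    (hspan : ∃ R : Matrix (Fin p) (Fin p) ℝ, V = Q * R) :
    (-1 : ℝ) ^ p * ∑ X : Finset (Fin n), (saddleSub L V X).det =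
      (1 + (1 - Q * Qᵀ) * L * (1 - Q * Qᵀ)).det * (Vᵀ * V).det :=
  saddle_normalisation_general L V Q hQQ hspan
end

section
/- Let (L,V) be a nonnegative pair and let L' = L + V·Xᵀ + Y·Vᵀ for arbitrary matrices X, Y ∈ ℝ^{n×p}. Then for every subset S ⊆ {1,...,n}: det([[L'_S, V_{S,:}],[(V_{S,:})ᵀ, 0]]) = det([[L_S, V_{S,:}],[(V_{S,:})ᵀ, 0]]). Consequently the extended L-ensembles based on (L,V) and (L',V) coincide. -/
open Matrix

/-!
Adding `V Xᵀ + Y Vᵀ` to the leading block of `[[L_S, V_S], [V_Sᵀ, 0]]` is the same as multiplying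
it on the left by the unitriangular `[[1, Y_S], [0, 1]]` and on the right by `[[1, 0], [X_Sᵀ, 1]]`,
which does not change the determinant.
-/

namespace Matrix

variable {m k ι R : Type*} [Fintype k] [CommRing R]

theorem submatrix_mul_transpose_eq (A B : Matrix m k R) (f : ι → m) :
    (A * Bᵀ).submatrix f f = A.submatrix f id * (B.submatrix f id)ᵀ := by
  ext i j
  simp [mul_apply]

variable [Fintype m] [DecidableEq m] [DecidableEq k]

theorem fromBlocks_add_mul_add_mul_zero (A : Matrix m m R) (B D : Matrix m k R)
    (C E : Matrix k m R) :
    fromBlocks (A + B * C + D * E) B E 0 =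
      fromBlocks 1 D 0 1 * fromBlocks A B E 0 * fromBlocks 1 0 C 1 := by
  simp only [fromBlocks_multiply, Matrix.one_mul, Matrix.mul_one, Matrix.zero_mul,
    Matrix.mul_zero, add_zero, zero_add]
  abel_nf

theorem det_fromBlocks_add_mul_add_mul_zero (A : Matrix m m R) (B D : Matrix m k R)
    (C E : Matrix k m R) :
    (fromBlocks (A + B * C + D * E) B E 0).det = (fromBlocks A B E 0).det := by
  rw [fromBlocks_add_mul_add_mul_zero, det_mul, det_mul, det_fromBlocks_zero₂₁,
    det_fromBlocks_zero₁₂, det_one, det_one, one_mul, one_mul, mul_one]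

end Matrix

theorem saddle_det_invariant_add_general {n p : ℕ}
    (L : Matrix (Fin n) (Fin n) ℝ)
    (V : Matrix (Fin n) (Fin p) ℝ)
    (X Y : Matrix (Fin n) (Fin p) ℝ) :
    ∀ S : Finset (Fin n),
      (saddleSub (L + V * Xᵀ + Y * Vᵀ) V S).det = (saddleSub L V S).det := by
  intro S
  simp only [saddleSub, submatrix_add, Pi.add_apply, submatrix_mul_transpose_eq]
  exact det_fromBlocks_add_mul_add_mul_zero _ _ _ _ _

/-- Invariance of extended L-ensembles under modifications of `L` along `span(V)`:
replacing `L` by `L' = L + V Xᵀ + Y Vᵀ` leaves all saddle-point determinants unchanged. -/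
theorem saddle_det_invariant_add {n p : ℕ}
    (L : Matrix (Fin n) (Fin n) ℝ) (hL : Lᵀ = L)
    (V : Matrix (Fin n) (Fin p) ℝ) (hV : V.rank = p)
    (hCPSD : ∀ x : Fin n → ℝ, Vᵀ.mulVec x = 0 → 0 ≤ x ⬝ᵥ L.mulVec x)
    (X Y : Matrix (Fin n) (Fin p) ℝ) :
    ∀ S : Finset (Fin n),
      (saddleSub (L + V * Xᵀ + Y * Vᵀ) V S).det = (saddleSub L V S).det :=
  saddle_det_invariant_add_general L V X Y
end
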